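/- arXiv:2506.04222 — 3 statements merged into one kernel-verified Lean document; each statement's English description precedes it below -/
import Mathlib

section
/- In the big grading group G′, for every j ∈ ℤ/4ℤ the decreasing cyclic product satisfies gr′(ρ_{j+1})·gr′(ρ_j)·gr′(ρ_{j−1})·gr′(ρ_{j−2}) = (−3; 1, 1, 1, 1), where indices are taken modulo 4. (This is the key grading identity showing that move (2), inserting the four chords ρ_{j+1}, ρ_j, ρ_{j−1}, ρ_{j−2}, drops the Maslov component of the product of gradings by three.) -/
/-- The underlying carrier of the big grading group `G'`, with the `ℤ⁴` (spin-c)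
component indexed cyclically by `ℤ/4ℤ`. -/
structure BG where
  m : ℚ
  v : ZMod 4 → ℤ

/-- The multiplication on the big grading group `G'`:
`(m; a,b,c,d)·(m′; a′,b′,c′,d′) = (m + m′ + ½(ab′−a′b) + ½(bc′−b′c) + ½(cd′−c′d) + ½(da′−d′a);
a+a′, b+b′, c+c′, d+d′)`, written with the cyclic index convention. -/
def bmul (x y : BG) : BG :=
  ⟨x.m + y.m +
      ((∑ i : ZMod 4, (x.v i * y.v (i + 1) - y.v i * x.v (i + 1)) : ℤ) : ℚ) / 2,
    x.v + y.v⟩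

/-- The grading `gr′(ρ_i) = (−½; e_i)`, where `e_i` is the `i`-th standard basis
vector of `ℤ⁴`, indices taken modulo 4. -/
def grRho (i : ZMod 4) : BG := ⟨-(1 / 2), Pi.single i 1⟩

/-!
The `ℤ⁴` components add up to `(1, 1, 1, 1)` because `j + 1, j, j - 1, j - 2` exhaust `ℤ/4ℤ`.
The Maslov component is the sum `-2` of the four `-½`'s plus half the sum of the pairwise areas
`ω(e_a, e_b) = δ_{b, a+1} - δ_{a, b+1}`, which depend only on `b - a`: the three adjacent decreasing
pairs give `-1` each, the wrap-around pair `(ρ_{j+1}, ρ_{j-2})` gives `+1`, the antipodal pairs `0`.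
Hence the Maslov component is `-2 + ½ · (-2) = -3`.
-/

attribute [ext] BG

def cyclicArea (u w : ZMod 4 → ℤ) : ℤ := ∑ i, (u i * w (i + 1) - w i * u (i + 1))

lemma bmul_m (x y : BG) : (bmul x y).m = x.m + y.m + (cyclicArea x.v y.v : ℚ) / 2 := rfl

lemma bmul_v (x y : BG) : (bmul x y).v = x.v + y.v := rfl

lemma cyclicArea_add_left (u u' w : ZMod 4 → ℤ) :
    cyclicArea (u + u') w = cyclicArea u w + cyclicArea u' w := by
  simp only [cyclicArea, Pi.add_apply, ← Finset.sum_add_distrib]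
  exact Finset.sum_congr rfl fun _ _ => by ring

lemma cyclicArea_single_single (a b : ZMod 4) :
    cyclicArea (Pi.single a 1) (Pi.single b 1) =
      (if b = a + 1 then 1 else 0) - (if a = b + 1 then 1 else 0) := by
  revert a b
  decide

lemma cyclicArea_decreasing_chords (j : ZMod 4) :
    cyclicArea (Pi.single (j + 1) 1) (Pi.single j 1) +
      cyclicArea (Pi.single (j + 1) 1 + Pi.single j 1) (Pi.single (j - 1) 1) +
      cyclicArea (Pi.single (j + 1) 1 + Pi.single j 1 + Pi.single (j - 1) 1)
        (Pi.single (j - 2) 1) = -2 := by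
  simp only [cyclicArea_add_left, cyclicArea_single_single, sub_eq_add_neg, add_assoc,
    add_right_inj, left_eq_add]
  decide

lemma single_add_single_add_single_add_single (j : ZMod 4) :
    (Pi.single (j + 1) 1 + Pi.single j 1 + Pi.single (j - 1) 1 + Pi.single (j - 2) 1 :
      ZMod 4 → ℤ) = fun _ => 1 := by
  revert j
  decide

/-- In the big grading group `G′`, for every `j ∈ ℤ/4ℤ` the decreasing cyclic product
satisfies `gr′(ρ_{j+1})·gr′(ρ_j)·gr′(ρ_{j−1})·gr′(ρ_{j−2}) = (−3; 1, 1, 1, 1)`,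
where indices are taken modulo 4. (Move (2), inserting the four chords
`ρ_{j+1}, ρ_j, ρ_{j−1}, ρ_{j−2}`, drops the Maslov component by three.) -/
theorem grading_of_move_two_insertion :
    ∀ j : ZMod 4,
      bmul (bmul (bmul (grRho (j + 1)) (grRho j)) (grRho (j - 1))) (grRho (j - 2)) =
        ⟨-3, fun _ => 1⟩ := by
  intro j
  refine BG.ext ?_ (single_add_single_add_single_add_single j)
  have hArea := congrArg (fun n : ℤ => (n : ℚ)) (cyclicArea_decreasing_chords j)
  simp only [bmul_m, bmul_v, grRho] at hArea ⊢
  push_cast at hArea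
  linarith
end

section
/- In the intermediate grading group G, set B_t = (½; ½, ½ − t) for integers t ≥ 1. For all integers i, j ≥ 1, every natural number k, every integer l, and every h in the three-element set {(0; 0, 0), (−½; 0, 1), (−3/2; 0, −1)}, the equation λ·B_j^{−1}·(−2k; 0, 0)·h·B_i·(½; 1, 0)^l = (0; 0, 0) holds if and only if (h = (−½; 0, 1), i = j + 1, k = 0, l = 0) or (h = (−3/2; 0, −1), i = j − 1, k = 0, l = 0). (This is the grading computation classifying the permissible differential terms between the generators b_{p−j} and b_{p−i} — and identically between c_{p−j} and c_{p−i} — of the weighted type D module CFD⁻ of the (p,1)-cable: only ρ23 ⊗ b_{p−(j+1)} and ρ41 ⊗ b_{p−(j−1)} are permitted.) -/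
/-- The underlying carrier of the intermediate grading group `G`: triples `(m; a, b)`
of rational numbers (restricted to half-integers in the membership predicate `memG`),
with multiplication `(m; a, b)·(m′; a′, b′) = (m + m′ + ab′ − a′b; a + a′, b + b′)`. -/
@[ext]
structure IGG where
  m : ℚ
  a : ℚ
  b : ℚ

namespace IGG

instance : Mul IGG :=
  ⟨fun x y => ⟨x.m + y.m + x.a * y.b - y.a * x.b, x.a + y.a, x.b + y.b⟩⟩
instance : One IGG := ⟨⟨0, 0, 0⟩⟩
instance : Inv IGG := ⟨fun x => ⟨-x.m, -x.a, -x.b⟩⟩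

@[simp] theorem mul_m (x y : IGG) : (x * y).m = x.m + y.m + x.a * y.b - y.a * x.b := rfl
@[simp] theorem mul_a (x y : IGG) : (x * y).a = x.a + y.a := rfl
@[simp] theorem mul_b (x y : IGG) : (x * y).b = x.b + y.b := rfl
@[simp] theorem one_m : (1 : IGG).m = 0 := rfl
@[simp] theorem one_a : (1 : IGG).a = 0 := rfl
@[simp] theorem one_b : (1 : IGG).b = 0 := rfl
@[simp] theorem inv_m (x : IGG) : x⁻¹.m = -x.m := rfl
@[simp] theorem inv_a (x : IGG) : x⁻¹.a = -x.a := rfl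
@[simp] theorem inv_b (x : IGG) : x⁻¹.b = -x.b := rfl

instance : Group IGG :=
  Group.ofLeftAxioms
    (fun x y z => by ext <;> simp <;> ring)
    (fun x => by ext <;> simp)
    (fun x => by ext <;> simp)

end IGG

/-- Membership in the intermediate grading group `G`: triples `(m; a, b)` of
half-integers such that `a + b ∈ ℤ` and `m + ((2a+1)(a+b+1)+1)/2 ∈ ℤ`. -/
def memG (x : IGG) : Prop :=
  (∃ n : ℤ, x.m = n / 2) ∧ (∃ n : ℤ, x.a = n / 2) ∧ (∃ n : ℤ, x.b = n / 2) ∧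
  (∃ n : ℤ, x.a + x.b = (n : ℚ)) ∧
  (∃ n : ℤ, x.m + ((2 * x.a + 1) * (x.a + x.b + 1) + 1) / 2 = (n : ℚ))

/-- `λ = (1; 0, 0)`. -/
def lambdaG : IGG := ⟨1, 0, 0⟩
/-- `B_t = (½; ½, ½ − t)`, the `G`-grading of the generator `b_{p−t}` of `CFD⁻` of
the `(p,1)`-cable. -/
def Bgr (t : ℤ) : IGG := ⟨1/2, 1/2, 1/2 - (t : ℚ)⟩

/-!
Writing `h = (h_m; 0, h_b)`, the product has `a`-coordinate `l` and `b`-coordinate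
`j - i + h_b`, so it can only vanish when `l = 0` and `i = j + h_b`; its `m`-coordinate then
becomes `1 - 2k + h_m - h_b / 2`. For the two nontrivial `h` this is `-2k`, forcing `k = 0`,
while for `h = 1` it would require `2k = 1`, impossible for a natural number `k`.
-/

namespace IGG

theorem zpow_eq (x : IGG) (n : ℤ) : x ^ n = ⟨n * x.m, n * x.a, n * x.b⟩ := by
  induction n using Int.induction_on with
  | zero => ext <;> simp
  | succ n ih => rw [zpow_add_one, ih]; ext <;> simp <;> ring
  | pred n ih => rw [zpow_sub_one, ih]; ext <;> simp <;> ring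

theorem mk_eq_one_iff (m a b : ℚ) : (⟨m, a, b⟩ : IGG) = 1 ↔ m = 0 ∧ a = 0 ∧ b = 0 := by
  simp [IGG.ext_iff]

end IGG

theorem grading_product_eq (i j : ℤ) (k : ℕ) (l : ℤ) (hm hb : ℚ) :
    lambdaG * (Bgr j)⁻¹ * ⟨-2 * (k : ℚ), 0, 0⟩ * ⟨hm, 0, hb⟩ * Bgr i * ⟨1/2, 1, 0⟩ ^ l =
      ⟨1 - 2 * k + hm - hb + (i - j) / 2 + l / 2 - l * (j - i + hb), l, j - i + hb⟩ := by
  rw [IGG.zpow_eq]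
  ext <;> simp [lambdaG, Bgr] <;> ring

theorem grading_product_eq_one_iff (i j : ℤ) (k : ℕ) (l : ℤ) (hm hb : ℚ) :
    lambdaG * (Bgr j)⁻¹ * ⟨-2 * (k : ℚ), 0, 0⟩ * ⟨hm, 0, hb⟩ * Bgr i * ⟨1/2, 1, 0⟩ ^ l = 1 ↔
      l = 0 ∧ (i : ℚ) = j + hb ∧ 2 * (k : ℚ) = 1 + hm - hb / 2 := by
  rw [grading_product_eq, IGG.mk_eq_one_iff, Int.cast_eq_zero]
  constructor
  · rintro ⟨hm0, rfl, hb0⟩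
    refine ⟨rfl, by linarith, by push_cast at hm0; linarith⟩
  · rintro ⟨rfl, hi, hk⟩
    refine ⟨by push_cast; linarith, rfl, by linarith⟩

/-- In the intermediate grading group `G`, for all integers `i, j ≥ 1`, every natural
number `k`, every integer `l`, and every `h` in the three-element set
`{(0; 0, 0), (−½; 0, 1), (−3/2; 0, −1)}`, the equation
`λ·B_j⁻¹·(−2k; 0, 0)·h·B_i·(½; 1, 0)^l = (0; 0, 0)` holds if and only if
`(h = (−½; 0, 1), i = j + 1, k = 0, l = 0)` or
`(h = (−3/2; 0, −1), i = j − 1, k = 0, l = 0)`. (This classifies the permissible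
differential terms between the generators `b_{p−j}` and `b_{p−i}` — and identically
between `c_{p−j}` and `c_{p−i}` — of the weighted type D module `CFD⁻` of the
`(p,1)`-cable: only `ρ23 ⊗ b_{p−(j+1)}` and `ρ41 ⊗ b_{p−(j−1)}` are permitted.) -/
theorem cable_grading_constraint_b_to_b :
    ∀ (i j : ℤ), 1 ≤ i → 1 ≤ j → ∀ (k : ℕ) (l : ℤ),
      ∀ h ∈ ({⟨0, 0, 0⟩, ⟨-(1/2), 0, 1⟩, ⟨-(3/2), 0, -1⟩} : Set IGG),
        (lambdaG * (Bgr j)⁻¹ * (⟨-2 * (k : ℚ), 0, 0⟩ : IGG) * h * Bgr i *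
            (⟨1/2, 1, 0⟩ : IGG) ^ l = (⟨0, 0, 0⟩ : IGG) ↔
          (h = (⟨-(1/2), 0, 1⟩ : IGG) ∧ i = j + 1 ∧ k = 0 ∧ l = 0) ∨
          (h = (⟨-(3/2), 0, -1⟩ : IGG) ∧ i = j - 1 ∧ k = 0 ∧ l = 0)) := by
  intro i j _ _ k l h hh
  change _ = (1 : IGG) ↔ _
  simp only [Set.mem_insert_iff, Set.mem_singleton_iff] at hh
  rcases hh with rfl | rfl | rfl <;>
    simp only [grading_product_eq_one_iff, IGG.mk.injEq] <;> norm_num <;> norm_cast <;> omega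
end

section
/- In the intermediate grading group G, set B_t = (½; ½, ½ − t) and C_t = (−½; ½, ½ − t) for integers t ≥ 1. For all integers i, j ≥ 1, every natural number k, every integer l, and every h in the three-element set {(0; 0, 0), (−½; 0, 1), (−3/2; 0, −1)}, the equation λ·B_j^{−1}·(−2k; 0, 0)·h·C_i·(½; 1, 0)^l = (0; 0, 0) holds if and only if h = (0; 0, 0), i = j, k = 0, and l = 0. (This classifies the permissible differential terms from b_{p−j} to c_{p−i} in CFD⁻ of the (p,1)-cable: only the term 1 ⊗ c_{p−j} is grading-permissible.) -/
/-- `C_t = (−½; ½, ½ − t)`, the `G`-grading of the generator `c_{p−t}` of `CFD⁻` of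
the `(p,1)`-cable. -/
def Cgr (t : ℤ) : IGG := ⟨-(1/2), 1/2, 1/2 - (t : ℚ)⟩

theorem lambdaG_mul_Bgr_inv_mul_Cgr_eq (i j l : ℤ) (c : ℚ) (h : IGG) (ha : h.a = 0) :
    lambdaG * (Bgr j)⁻¹ * (⟨c, 0, 0⟩ : IGG) * h * Cgr i * (⟨1/2, 1, 0⟩ : IGG) ^ l =
      ⟨c + h.m - h.b + (i - j) / 2 + l / 2 - l * (j - i + h.b), l, j - i + h.b⟩ := by
  rw [IGG.zpow_eq]
  ext <;> simp [lambdaG, Bgr, Cgr, ha] <;> ring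

theorem lambdaG_mul_Bgr_inv_mul_Cgr_eq_one_iff (i j l : ℤ) (c : ℚ) (h : IGG) (ha : h.a = 0) :
    lambdaG * (Bgr j)⁻¹ * (⟨c, 0, 0⟩ : IGG) * h * Cgr i * (⟨1/2, 1, 0⟩ : IGG) ^ l = 1 ↔
      l = 0 ∧ h.b = i - j ∧ c + h.m - h.b / 2 = 0 := by
  rw [lambdaG_mul_Bgr_inv_mul_Cgr_eq i j l c h ha, IGG.ext_iff]
  simp only [IGG.one_m, IGG.one_a, IGG.one_b, Int.cast_eq_zero]
  constructor
  · rintro ⟨hm, rfl, hb⟩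
    refine ⟨rfl, by linarith, ?_⟩
    simp only [Int.cast_zero, zero_mul, zero_div, add_zero, sub_zero] at hm
    linarith
  · rintro ⟨rfl, hb, hm⟩
    refine ⟨?_, by simp, by linarith⟩
    simp only [Int.cast_zero, zero_mul, zero_div, add_zero, sub_zero]
    linarith

/-- In the intermediate grading group `G`, for all integers `i, j ≥ 1`, every natural
number `k`, every integer `l`, and every `h` in the three-element set
`{(0; 0, 0), (−½; 0, 1), (−3/2; 0, −1)}`, the equation
`λ·B_j⁻¹·(−2k; 0, 0)·h·C_i·(½; 1, 0)^l = (0; 0, 0)` holds if and only if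
`h = (0; 0, 0)`, `i = j`, `k = 0`, and `l = 0`. (This classifies the permissible
differential terms from `b_{p−j}` to `c_{p−i}` in `CFD⁻` of the `(p,1)`-cable: only
the term `1 ⊗ c_{p−j}` is grading-permissible.) -/
theorem cable_grading_constraint_b_to_c :
    ∀ (i j : ℤ), 1 ≤ i → 1 ≤ j → ∀ (k : ℕ) (l : ℤ),
      ∀ h ∈ ({⟨0, 0, 0⟩, ⟨-(1/2), 0, 1⟩, ⟨-(3/2), 0, -1⟩} : Set IGG),
        (lambdaG * (Bgr j)⁻¹ * (⟨-2 * (k : ℚ), 0, 0⟩ : IGG) * h * Cgr i *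
            (⟨1/2, 1, 0⟩ : IGG) ^ l = (⟨0, 0, 0⟩ : IGG) ↔
          (h = (⟨0, 0, 0⟩ : IGG) ∧ i = j ∧ k = 0 ∧ l = 0)) := by
  intro i j _ _ k l h hh
  have hk : (0 : ℚ) ≤ k := k.cast_nonneg
  change _ = (1 : IGG) ↔ _
  rcases hh with rfl | rfl | rfl <;>
    rw [lambdaG_mul_Bgr_inv_mul_Cgr_eq_one_iff i j l _ _ rfl]
  · constructor
    · rintro ⟨rfl, hij, hm⟩
      refine ⟨rfl, ?_, ?_, rfl⟩
      · exact_mod_cast (sub_eq_zero.mp hij.symm)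
      · exact_mod_cast (by linarith : (k : ℚ) = 0)
    · rintro ⟨-, rfl, rfl, rfl⟩
      norm_num
  all_goals
    refine iff_of_false (fun ⟨_, _, hm⟩ => by linarith) (fun ⟨he, _⟩ => ?_)
    norm_num [IGG.ext_iff] at he
end
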